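/- arXiv:2601.21434 — 4 statements merged into one kernel-verified Lean document; each statement's English description precedes it below -/
import Mathlib

section
/- Let μ be a finite Borel measure on T = {0,1,...,m-1}^ℕ, and for each n ≥ 1 let Γ_n be a union of m-adic intervals of level n. Suppose there is K > 0 such that for every n ≥ 0 and every interval I of level n, μ(I ∩ Γ_{n+1}) ≥ K·μ(I). Then for μ-a.e. x ∈ T and every positive integer d, the sequence of balls {B_n(x)}_{n≥0} contains d consecutive marked balls, i.e., there exists n such that B_{n+1}(x) ⊆ Γ_{n+1}, ..., B_{n+d}(x) ⊆ Γ_{n+d}. -/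
open MeasureTheory Filter Set ENNReal

open Classical in
noncomputable def tdist {m : ℕ} (a b : ℕ → Fin m) : ℝ :=
  if h : ∃ n, a n ≠ b n then (m : ℝ) ^ (-(Nat.find h : ℤ)) else 0

def cyl {m : ℕ} (n : ℕ) (x : ℕ → Fin m) : Set (ℕ → Fin m) :=
  {y | ∀ i < n, y i = x i}

def IsLevelUnion {m : ℕ} (n : ℕ) (S : Set (ℕ → Fin m)) : Prop :=
  ∀ x ∈ S, cyl n x ⊆ S

/-!
Split the sequence of levels into consecutive blocks of length `d`. Iterating the hypothesis
`d` times inside any union of level-`n` intervals shows that a proportion at least `K ^ d` of it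
is marked at all of the levels `n + 1, …, n + d`. Applied at `n = N d` to the set of points with
no marked block among the first `N` blocks, this shows that the measure of that set decays like
`(1 - K ^ d) ^ N`, so almost every point has a fully marked block.
-/

theorem ae_exists_mem_of_mul_measure_le {α : Type*} [MeasurableSpace α] {μ : Measure α}
    [IsFiniteMeasure μ] {G : ℕ → Set α} (hG : ∀ N, MeasurableSet (G N)) {q : ℝ≥0∞}
    (hq : q ≠ 0) (h : ∀ N, q * μ (⋂ j < N, (G j)ᶜ) ≤ μ ((⋂ j < N, (G j)ᶜ) ∩ G N)) :
    ∀ᵐ x ∂μ, ∃ N, x ∈ G N := by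
  set F : ℕ → Set α := fun N => ⋂ j < N, (G j)ᶜ
  have hstep : ∀ N, μ (F (N + 1)) ≤ (1 - q) * μ (F N) := fun N =>
    calc μ (F (N + 1)) = μ (F N \ G N) := by simp only [F, biInter_lt_succ, sdiff_eq]
      _ = μ (F N) - μ (F N ∩ G N) := ENNReal.eq_sub_of_add_eq (measure_ne_top μ _)
          (by rw [add_comm, measure_inter_add_sdiff _ (hG N)])
      _ ≤ μ (F N) - q * μ (F N) := tsub_le_tsub_left (h N) _
      _ = (1 - q) * μ (F N) := by rw [ENNReal.sub_mul fun _ _ => measure_ne_top μ _, one_mul]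
  have hdecay : ∀ N, μ (F N) ≤ (1 - q) ^ N * μ univ := by
    intro N
    induction N with
    | zero => simpa using measure_mono (subset_univ _)
    | succ N ih =>
      calc μ (F (N + 1)) ≤ (1 - q) * μ (F N) := hstep N
        _ ≤ (1 - q) * ((1 - q) ^ N * μ univ) := by gcongr
        _ = (1 - q) ^ (N + 1) * μ univ := by ring
  have hlim : Tendsto (fun N => (1 - q) ^ N * μ univ) atTop (nhds 0) := by
    simpa using ENNReal.Tendsto.mul_const (ENNReal.tendsto_pow_atTop_nhds_zero_of_lt_one
      (ENNReal.sub_lt_self one_ne_top one_ne_zero hq)) (Or.inr (measure_ne_top μ univ))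
  rw [ae_iff]
  refine le_antisymm (ge_of_tendsto' hlim fun N => (measure_mono ?_).trans (hdecay N)) zero_le
  exact fun x hx => mem_iInter₂.2 fun j _ hj => hx ⟨j, hj⟩

section Cylinders

variable {m : ℕ}

def firstCoords (n : ℕ) (x : ℕ → Fin m) : Fin n → Fin m := fun i => x i

lemma measurable_firstCoords (n : ℕ) : Measurable (firstCoords (m := m) n) :=
  measurable_pi_lambda _ fun i => measurable_pi_apply (i : ℕ)

lemma cyl_eq_preimage (n : ℕ) (x : ℕ → Fin m) :
    cyl n x = firstCoords n ⁻¹' {firstCoords n x} := by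
  ext y
  simp [cyl, firstCoords, funext_iff, Fin.forall_iff]

lemma cyl_anti {n n' : ℕ} (h : n ≤ n') (x : ℕ → Fin m) : cyl n' x ⊆ cyl n x :=
  fun _ hy i hi => hy i (hi.trans_le h)

namespace IsLevelUnion

variable {n : ℕ} {S T : Set (ℕ → Fin m)}

lemma mono {n' : ℕ} (h : n ≤ n') (hS : IsLevelUnion n S) : IsLevelUnion n' S :=
  fun x hx => (cyl_anti h x).trans (hS x hx)

lemma compl (hS : IsLevelUnion n S) : IsLevelUnion n Sᶜ :=
  fun _ hx y hy hyS => hx (hS y hyS fun i hi => (hy i hi).symm)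

lemma inter (hS : IsLevelUnion n S) (hT : IsLevelUnion n T) : IsLevelUnion n (S ∩ T) :=
  fun x hx => subset_inter (hS x hx.1) (hT x hx.2)

lemma iInter {ι : Sort*} {f : ι → Set (ℕ → Fin m)} (h : ∀ i, IsLevelUnion n (f i)) :
    IsLevelUnion n (⋂ i, f i) :=
  fun x hx => subset_iInter fun i => h i x (mem_iInter.1 hx i)

lemma preimage_image_eq (hS : IsLevelUnion n S) : firstCoords n ⁻¹' (firstCoords n '' S) = S :=
  (subset_preimage_image _ _).antisymm' fun y ⟨x, hx, hxy⟩ =>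
    hS x hx (by rw [cyl_eq_preimage]; exact hxy.symm)

lemma measurableSet (hS : IsLevelUnion n S) : MeasurableSet S :=
  hS.preimage_image_eq ▸ measurable_firstCoords n (DiscreteMeasurableSpace.forall_measurableSet _)

lemma mul_measure_le_measure_inter (μ : Measure (ℕ → Fin m)) {E : Set (ℕ → Fin m)}
    {K : ℝ≥0∞} (hS : IsLevelUnion n S) (h : ∀ x, K * μ (cyl n x) ≤ μ (cyl n x ∩ E)) :
    K * μ S ≤ μ (S ∩ E) := by
  classical
  set s := (toFinite (firstCoords n '' S)).toFinset
  have hfiber : ∀ w : Fin n → Fin m, MeasurableSet (firstCoords n ⁻¹' {w}) :=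
    fun w => measurable_firstCoords n (measurableSet_singleton w)
  have hsum : ∀ ν : Measure (ℕ → Fin m), ν S = ∑ w ∈ s, ν (firstCoords n ⁻¹' {w}) := by
    intro ν
    rw [sum_measure_preimage_singleton s fun w _ => hfiber w, Finite.coe_toFinset,
      hS.preimage_image_eq]
  rw [← Measure.restrict_apply hS.measurableSet, hsum, hsum, Finset.mul_sum]
  refine Finset.sum_le_sum fun w hw => ?_
  obtain ⟨x, -, rfl⟩ := (Finite.mem_toFinset _).1 hw
  rw [Measure.restrict_apply (hfiber _), ← cyl_eq_preimage]
  exact h x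

end IsLevelUnion

end Cylinders

section MarkedRuns

def markedRun {α : Type*} (Γ : ℕ → Set α) (n d : ℕ) : Set α :=
  {x | ∀ k, 1 ≤ k → k ≤ d → x ∈ Γ (n + k)}

lemma markedRun_zero {α : Type*} (Γ : ℕ → Set α) (n : ℕ) : markedRun Γ n 0 = univ :=
  eq_univ_of_forall fun _ k hk hk0 => absurd hk (by omega)

lemma markedRun_succ {α : Type*} (Γ : ℕ → Set α) (n d : ℕ) :
    markedRun Γ n (d + 1) = markedRun Γ n d ∩ Γ (n + (d + 1)) := by
  ext x
  refine ⟨fun h => ⟨fun k hk hkd => h k hk (by omega), h _ (by omega) le_rfl⟩, ?_⟩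
  rintro ⟨h, hlast⟩ k hk hkd
  rcases Nat.lt_or_eq_of_le hkd with hkd | rfl
  exacts [h k hk (by omega), hlast]

variable {m : ℕ} {Γ : ℕ → Set (ℕ → Fin m)}

lemma isLevelUnion_markedRun (hΓ : ∀ n, 1 ≤ n → IsLevelUnion n (Γ n)) (n d : ℕ) :
    IsLevelUnion (n + d) (markedRun Γ n d) :=
  fun x hx _ hy k hk hkd => hΓ (n + k) (by omega) x (hx k hk hkd) (cyl_anti (by omega) x hy)

lemma pow_mul_measure_le_measure_inter_markedRun {μ : Measure (ℕ → Fin m)} {K : ℝ≥0∞}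
    (hΓ : ∀ n, 1 ≤ n → IsLevelUnion n (Γ n))
    (hlow : ∀ n x, K * μ (cyl n x) ≤ μ (cyl n x ∩ Γ (n + 1))) (d : ℕ) {n : ℕ}
    {S : Set (ℕ → Fin m)} (hS : IsLevelUnion n S) :
    K ^ d * μ S ≤ μ (S ∩ markedRun Γ n d) := by
  induction d with
  | zero => simp [markedRun_zero]
  | succ d ih =>
    have hrun : IsLevelUnion (n + d) (S ∩ markedRun Γ n d) :=
      (hS.mono (by omega)).inter (isLevelUnion_markedRun hΓ n d)
    calc K ^ (d + 1) * μ S = K * (K ^ d * μ S) := by ring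
      _ ≤ K * μ (S ∩ markedRun Γ n d) := by gcongr
      _ ≤ μ (S ∩ markedRun Γ n d ∩ Γ (n + d + 1)) :=
        hrun.mul_measure_le_measure_inter μ (hlow (n + d))
      _ = μ (S ∩ markedRun Γ n (d + 1)) := by rw [markedRun_succ, inter_assoc, add_assoc]

end MarkedRuns

theorem ae_arbitrarily_long_marked_runs_general (m : ℕ)
    (μ : Measure (ℕ → Fin m)) [IsFiniteMeasure μ] (Γ : ℕ → Set (ℕ → Fin m))
    (hΓ : ∀ n, 1 ≤ n → IsLevelUnion n (Γ n))
    (K : ℝ≥0∞) (hK : 0 < K)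
    (hlow : ∀ n : ℕ, ∀ x : ℕ → Fin m, K * μ (cyl n x) ≤ μ (cyl n x ∩ Γ (n + 1))) :
    ∀ᵐ x ∂μ, ∀ d : ℕ, 0 < d →
      ∃ n : ℕ, ∀ k : ℕ, 1 ≤ k → k ≤ d → cyl (n + k) x ⊆ Γ (n + k) := by
  rw [ae_all_iff]
  intro d
  set G : ℕ → Set (ℕ → Fin m) := fun N => markedRun Γ (N * d) d
  have hG : ∀ N, IsLevelUnion ((N + 1) * d) (G N) := fun N => by
    simpa only [add_one_mul] using isLevelUnion_markedRun hΓ (N * d) d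
  have hnone : ∀ N, IsLevelUnion (N * d) (⋂ j < N, (G j)ᶜ) := fun N =>
    IsLevelUnion.iInter fun j => IsLevelUnion.iInter fun hj =>
      (hG j).compl.mono (Nat.mul_le_mul_right d hj)
  have hblock : ∀ᵐ x ∂μ, ∃ N, x ∈ G N :=
    ae_exists_mem_of_mul_measure_le (fun N => (hG N).measurableSet) (pow_ne_zero d hK.ne')
      fun N => pow_mul_measure_le_measure_inter_markedRun hΓ hlow d (hnone N)
  filter_upwards [hblock] with x ⟨N, hx⟩ _
  exact ⟨N * d, fun k hk hkd => hΓ _ (by omega) x (hx k hk hkd)⟩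

theorem ae_arbitrarily_long_marked_runs (m : ℕ) (hm : 2 ≤ m)
    (μ : Measure (ℕ → Fin m)) [IsFiniteMeasure μ] (Γ : ℕ → Set (ℕ → Fin m))
    (hΓ : ∀ n, 1 ≤ n → IsLevelUnion n (Γ n))
    (K : ℝ≥0∞) (hK : 0 < K)
    (hlow : ∀ n : ℕ, ∀ x : ℕ → Fin m, K * μ (cyl n x) ≤ μ (cyl n x ∩ Γ (n + 1))) :
    ∀ᵐ x ∂μ, ∀ d : ℕ, 0 < d →
      ∃ n : ℕ, ∀ k : ℕ, 1 ≤ k → k ≤ d → cyl (n + k) x ⊆ Γ (n + k) :=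
  ae_arbitrarily_long_marked_runs_general m μ Γ hΓ K hK hlow
end

section
/- Let m ≥ 2 be an integer, α ∈ (0,1), and μ a finite nonzero Borel measure on T = {0,1,...,m-1}^ℕ with μ-a.e. finite upper α-densities and positive lower α-densities. Then for every positive integer i, the essential supremum of Θ^{α,*}(μ,x)/Θ_{α,*}(μ,x) is at least max(m^{αi}/⌊m^{αi}⌋, ⌈m^{αi}⌉/m^{αi}). -/
open MeasureTheory Filter Set ENNReal

def msupp {m : ℕ} (μ : Measure (ℕ → Fin m)) : Set (ℕ → Fin m) :=
  {x | ∀ n : ℕ, 0 < μ (cyl n x)}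

noncomputable def fdens {m : ℕ} (μ : Measure (ℕ → Fin m)) (α : ℝ) (n : ℕ)
    (x : ℕ → Fin m) : ℝ :=
  (m : ℝ) ^ (α * n) * (μ (cyl n x)).toReal

noncomputable def thetaUpper {m : ℕ} (μ : Measure (ℕ → Fin m)) (α : ℝ)
    (x : ℕ → Fin m) : ℝ≥0∞ :=
  Filter.limsup (fun n : ℕ => ENNReal.ofReal ((m : ℝ) ^ (α * n)) * μ (cyl n x)) atTop

noncomputable def thetaLower {m : ℕ} (μ : Measure (ℕ → Fin m)) (α : ℝ)
    (x : ℕ → Fin m) : ℝ≥0∞ :=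
  Filter.liminf (fun n : ℕ => ENNReal.ofReal ((m : ℝ) ^ (α * n)) * μ (cyl n x)) atTop
/-!
Write `N = m ^ (α i)`, so that `m ^ (α (n + i)) = N m ^ (α n)`, and suppose that
`thetaUpper ≤ t thetaLower` almost everywhere. On some set `A` of positive measure the lower and
upper densities lie in narrow windows `[l, l η)` and `[u, u η)`, so `u ≲ t l`, and from some level
on every `fdens μ α n y` with `y ∈ A` lies between `l / η` and `u η`. At a density point `x` of
`A`, let `q` be the number of children of `cyl n x` at level `n + i` that meet `A`; then
`q l ≲ N fdens μ α n x ≲ q u`. At a level where `fdens μ α n x ≈ l` this forces `q ≤ ⌊N⌋`, hence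
`N l ≲ ⌊N⌋ u`; at a level where `fdens μ α n x ≈ u` it forces `q ≥ ⌈N⌉`, hence `⌈N⌉ l ≲ N u`.
Letting `η → 1` gives `N / ⌊N⌋ ≤ t` and `⌈N⌉ / N ≤ t`.
-/

namespace Marstrand

open Topology

variable {m : ℕ}

def prefixOf (n : ℕ) (x : ℕ → Fin m) : Fin n → Fin m := fun j => x j

lemma measurable_prefixOf (n : ℕ) : Measurable (prefixOf (m := m) n) :=
  measurable_pi_lambda _ fun _ => measurable_pi_apply _

lemma cyl_eq_preimage_prefixOf (n : ℕ) (x : ℕ → Fin m) :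
    cyl n x = prefixOf n ⁻¹' {prefixOf n x} := by
  ext y
  simp [cyl, prefixOf, funext_iff, Fin.forall_iff]

lemma cyl_subset_cyl {n k : ℕ} (h : n ≤ k) (x : ℕ → Fin m) : cyl k x ⊆ cyl n x :=
  fun _ hy j hj => hy j (hj.trans_le h)

lemma cyl_eq_of_mem {n : ℕ} {x y : ℕ → Fin m} (h : y ∈ cyl n x) : cyl n y = cyl n x := by
  simp only [cyl_eq_preimage_prefixOf] at h ⊢
  rw [h]

lemma measurableSet_cyl (n : ℕ) (x : ℕ → Fin m) : MeasurableSet (cyl n x) := by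
  rw [cyl_eq_preimage_prefixOf]
  exact measurable_prefixOf n (measurableSet_singleton _)

lemma measurable_measure_cyl (μ : Measure (ℕ → Fin m)) (n : ℕ) :
    Measurable fun x => μ (cyl n x) := by
  simp_rw [cyl_eq_preimage_prefixOf]
  exact (measurable_of_countable fun w => μ (prefixOf n ⁻¹' {w})).comp (measurable_prefixOf n)

def IsCylindrical (n : ℕ) (F : Set (ℕ → Fin m)) : Prop := ∀ x ∈ F, cyl n x ⊆ F

lemma IsCylindrical.mono {n k : ℕ} {F : Set (ℕ → Fin m)} (hF : IsCylindrical n F) (h : n ≤ k) :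
    IsCylindrical k F :=
  fun x hx => (cyl_subset_cyl h x).trans (hF x hx)

lemma IsCylindrical.eq_preimage {n : ℕ} {F : Set (ℕ → Fin m)} (hF : IsCylindrical n F) :
    F = prefixOf n ⁻¹' (prefixOf n '' F) := by
  refine (subset_preimage_image _ _).antisymm ?_
  rintro y ⟨x, hx, hxy⟩
  exact hF x hx (by rw [cyl_eq_preimage_prefixOf]; exact hxy.symm)

lemma IsCylindrical.measurableSet {n : ℕ} {F : Set (ℕ → Fin m)} (hF : IsCylindrical n F) :
    MeasurableSet F := by
  rw [hF.eq_preimage]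
  exact measurable_prefixOf n (Set.to_countable _).measurableSet

lemma exists_isCylindrical_of_mem_measurableCylinders {F : Set (ℕ → Fin m)}
    (hF : F ∈ measurableCylinders fun _ : ℕ => Fin m) : ∃ n, IsCylindrical n F := by
  obtain ⟨s, S, -, rfl⟩ := (mem_measurableCylinders F).1 hF
  obtain ⟨n, hn⟩ := Finset.exists_nat_subset_range s
  refine ⟨n, fun x hx y hy => ?_⟩
  have : s.restrict y = s.restrict x :=
    funext fun j => hy j (Finset.mem_range.1 (hn j.2))
  rwa [mem_cylinder, this]

lemma IsCylindrical.measure_le {n : ℕ} {F : Set (ℕ → Fin m)} (hF : IsCylindrical n F)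
    {ν ρ : Measure (ℕ → Fin m)} (h : ∀ x ∈ F, ν (cyl n x) ≤ ρ (cyl n x)) : ν F ≤ ρ F := by
  have hfib : ∀ w ∈ prefixOf n '' F, MeasurableSet (prefixOf (m := m) n ⁻¹' {w}) :=
    fun _ _ => measurable_prefixOf n (measurableSet_singleton _)
  rw [hF.eq_preimage, ← tsum_measure_preimage_singleton (Set.to_countable _) hfib,
    ← tsum_measure_preimage_singleton (Set.to_countable _) hfib]
  refine ENNReal.tsum_le_tsum fun ⟨_, x, hx, hw⟩ => ?_
  simpa only [← hw, ← cyl_eq_preimage_prefixOf] using h x hx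

lemma measure_iUnion_le_of_forall_le {α : Type*} [MeasurableSpace α] {ν ρ : Measure α}
    {W : ℕ → Set α} (hW : ∀ n, MeasurableSet (W n)) (hdisj : Pairwise (Function.onFun Disjoint W))
    (h : ∀ n, ν (W n) ≤ ρ (W n)) : ν (⋃ n, W n) ≤ ρ (⋃ n, W n) := by
  rw [measure_iUnion hdisj hW, measure_iUnion hdisj hW]
  exact ENNReal.tsum_le_tsum h

/-- The first bad cylinders from level `k` on are disjoint, and each has a `δ`-proportion of its
mass outside `A`. -/
lemma maximal_ineq_cyl (μ : Measure (ℕ → Fin m)) {A : Set (ℕ → Fin m)} (hA : MeasurableSet A)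
    {k : ℕ} {F : Set (ℕ → Fin m)} (hF : IsCylindrical k F) (δ : ℝ≥0∞) :
    δ * μ {y | y ∈ F ∧ ∃ n, k ≤ n ∧ δ * μ (cyl n y) < μ (cyl n y \ A)} ≤ μ (F \ A) := by
  let Bad : ℕ → (ℕ → Fin m) → Prop := fun n y => δ * μ (cyl n y) < μ (cyl n y \ A)
  let W : ℕ → Set (ℕ → Fin m) := fun n =>
    {y | y ∈ F ∧ k ≤ n ∧ Bad n y ∧ ∀ j, k ≤ j → j < n → ¬ Bad j y}
  have hWcyl : ∀ n, IsCylindrical n (W n) := by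
    rintro n y ⟨hyF, hkn, hyn, hymin⟩ z hz
    have hcyl : ∀ j ≤ n, cyl j z = cyl j y := fun j hj => cyl_eq_of_mem (cyl_subset_cyl hj y hz)
    refine ⟨hF y hyF (cyl_subset_cyl hkn y hz), hkn, ?_, fun j hkj hjn => ?_⟩
    · simpa only [Bad, hcyl n le_rfl] using hyn
    · simpa only [Bad, hcyl j hjn.le] using hymin j hkj hjn
  have hWdisj : Pairwise (Function.onFun Disjoint W) := by
    intro n n' hnn'
    refine Set.disjoint_left.2 fun y hy hy' => ?_
    rcases lt_or_gt_of_ne hnn' with h | h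
    · exact hy'.2.2.2 n hy.2.1 h hy.2.2.1
    · exact hy.2.2.2 n' hy'.2.1 h hy'.2.2.1
  have hcover : {y | y ∈ F ∧ ∃ n, k ≤ n ∧ Bad n y} ⊆ ⋃ n, W n := by
    classical
    rintro y ⟨hyF, hex⟩
    exact mem_iUnion.2 ⟨Nat.find hex, hyF, (Nat.find_spec hex).1, (Nat.find_spec hex).2,
      fun j hkj hj hjbad => Nat.find_min hex hj ⟨hkj, hjbad⟩⟩
  calc δ * μ {y | y ∈ F ∧ ∃ n, k ≤ n ∧ Bad n y} ≤ (δ • μ) (⋃ n, W n) := by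
        rw [Measure.smul_apply, smul_eq_mul]; gcongr
    _ ≤ μ.restrict Aᶜ (⋃ n, W n) :=
      measure_iUnion_le_of_forall_le (fun n => (hWcyl n).measurableSet) hWdisj
        fun n => (hWcyl n).measure_le fun y hy => by
          rw [Measure.restrict_apply (measurableSet_cyl n y), ← sdiff_eq]
          exact hy.2.2.1.le
    _ ≤ μ (F \ A) := by
      rw [Measure.restrict_apply' hA.compl, ← sdiff_eq]
      exact measure_mono (sdiff_subset_sdiff_left (iUnion_subset fun n y hy => hy.1))

/-- The point is found in a union `F` of cylinders approximating `A`, outside the set controlled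
by `maximal_ineq_cyl`. -/
lemma exists_forall_measure_cyl_diff_le (μ : Measure (ℕ → Fin m)) [IsFiniteMeasure μ]
    {A : Set (ℕ → Fin m)} (hA : MeasurableSet A) (hA₀ : μ A ≠ 0) {δ : ℝ≥0∞} (hδ : 0 < δ)
    (n₀ : ℕ) : ∃ x ∈ A, ∃ n₁, n₀ ≤ n₁ ∧ ∀ n, n₁ ≤ n → μ (cyl n x \ A) ≤ δ * μ (cyl n x) := by
  set δ' := min δ 1
  suffices ∃ x ∈ A, ∃ n₁, n₀ ≤ n₁ ∧ ∀ n, n₁ ≤ n → μ (cyl n x \ A) ≤ δ' * μ (cyl n x) by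
    obtain ⟨x, hx, n₁, hn₁, h⟩ := this
    exact ⟨x, hx, n₁, hn₁, fun n hn => (h n hn).trans (by gcongr; exact min_le_left _ _)⟩
  have hδ'A : 0 < δ' * μ A := ENNReal.mul_pos (lt_min hδ one_pos).ne' hA₀
  obtain ⟨F, hF, hFA⟩ := exists_measure_symmDiff_lt_of_generateFrom_isSetRing (μ := μ)
    isSetRing_measurableCylinders
    ⟨{univ}, countable_singleton _, by simpa using univ_mem_measurableCylinders fun _ : ℕ => Fin m,
      by simp⟩
    generateFrom_measurableCylinders.symm hA hδ'A
  obtain ⟨k₀, hk₀⟩ := exists_isCylindrical_of_mem_measurableCylinders hF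
  have hFm : MeasurableSet F := hk₀.measurableSet
  by_contra! hbad
  have hcover : A ∩ F ⊆ {y | y ∈ F ∧ ∃ n, max k₀ n₀ ≤ n ∧
      δ' * μ (cyl n y) < μ (cyl n y \ A)} := fun y hy =>
    ⟨hy.2, hbad y hy.1 _ (le_max_right _ _)⟩
  have : δ' * μ A < δ' * μ A :=
    calc δ' * μ A ≤ δ' * μ (A ∩ F) + δ' * μ (A \ F) := by
          rw [← mul_add, measure_inter_add_sdiff _ hFm]
      _ ≤ μ (F \ A) + μ (A \ F) := by
          gcongr
          · exact (by gcongr : δ' * μ (A ∩ F) ≤ _).trans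
              (maximal_ineq_cyl μ hA (hk₀.mono (le_max_left _ _)) δ')
          · exact mul_le_of_le_one_left zero_le (min_le_right _ _)
      _ = μ (symmDiff F A) :=
          (measure_symmDiff_eq hFm.nullMeasurableSet hA.nullMeasurableSet).symm
      _ < δ' * μ A := hFA
  exact lt_irrefl _ this

/-- `q` is the number of level-`n'` subcylinders of `cyl n x` that meet `A`. -/
lemma exists_card_mul_le_and_le_card_mul (μ : Measure (ℕ → Fin m)) [IsFiniteMeasure μ]
    (A : Set (ℕ → Fin m)) {n n' : ℕ} (hn : n ≤ n') (x : ℕ → Fin m) {c lo hi : ℝ} (hc : 0 ≤ c)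
    (h : ∀ y ∈ A, lo ≤ c * μ.real (cyl n' y) ∧ c * μ.real (cyl n' y) ≤ hi) :
    ∃ q : ℕ, q * lo ≤ c * μ.real (cyl n x) ∧ c * μ.real (A ∩ cyl n x) ≤ q * hi := by
  classical
  let S : Finset (Fin n' → Fin m) :=
    Finset.univ.filter fun w => ∃ y ∈ A ∩ cyl n x, prefixOf n' y = w
  have hfib : ∀ w ∈ S, ∃ y ∈ A ∩ cyl n x, prefixOf n' ⁻¹' {w} = cyl n' y := by
    intro w hw
    obtain ⟨y, hy, rfl⟩ := (Finset.mem_filter.1 hw).2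
    exact ⟨y, hy, (cyl_eq_preimage_prefixOf n' y).symm⟩
  have hsum : ∑ w ∈ S, μ.real (prefixOf n' ⁻¹' {w}) = μ.real (prefixOf n' ⁻¹' S) :=
    sum_measureReal_preimage_singleton S fun _ _ =>
      measurable_prefixOf n' (measurableSet_singleton _)
  have hS_sub : prefixOf n' ⁻¹' S ⊆ cyl n x := by
    intro z hz
    obtain ⟨y, ⟨-, hyx⟩, hy⟩ := hfib _ hz
    rw [← cyl_eq_of_mem hyx]
    exact cyl_subset_cyl hn y (hy ▸ rfl)
  have hA_sub : A ∩ cyl n x ⊆ prefixOf n' ⁻¹' S := fun y hy =>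
    Finset.mem_coe.2 (Finset.mem_filter.2 ⟨Finset.mem_univ _, y, hy, rfl⟩)
  refine ⟨S.card, ?_, ?_⟩
  · calc (S.card : ℝ) * lo = ∑ w ∈ S, lo := by rw [Finset.sum_const, nsmul_eq_mul]
      _ ≤ ∑ w ∈ S, c * μ.real (prefixOf n' ⁻¹' {w}) := Finset.sum_le_sum fun w hw => by
          obtain ⟨y, hy, hwy⟩ := hfib w hw
          exact hwy ▸ (h y hy.1).1
      _ = c * μ.real (prefixOf n' ⁻¹' S) := by rw [← Finset.mul_sum, hsum]
      _ ≤ c * μ.real (cyl n x) := mul_le_mul_of_nonneg_left (measureReal_mono hS_sub) hc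
  · calc c * μ.real (A ∩ cyl n x) ≤ c * μ.real (prefixOf n' ⁻¹' S) :=
          mul_le_mul_of_nonneg_left (measureReal_mono hA_sub) hc
      _ = ∑ w ∈ S, c * μ.real (prefixOf n' ⁻¹' {w}) := by rw [← Finset.mul_sum, hsum]
      _ ≤ ∑ w ∈ S, hi := Finset.sum_le_sum fun w hw => by
          obtain ⟨y, hy, hwy⟩ := hfib w hw
          exact hwy ▸ (h y hy.1).2
      _ = S.card * hi := by rw [Finset.sum_const, nsmul_eq_mul]

lemma ofReal_rpow_mul_measure_cyl (μ : Measure (ℕ → Fin m)) [IsFiniteMeasure μ] (α : ℝ) (n : ℕ)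
    (x : ℕ → Fin m) :
    ENNReal.ofReal ((m : ℝ) ^ (α * n)) * μ (cyl n x) = ENNReal.ofReal (fdens μ α n x) := by
  rw [fdens, ENNReal.ofReal_mul (by positivity), ENNReal.ofReal_toReal (measure_ne_top _ _)]

lemma thetaUpper_eq_limsup (μ : Measure (ℕ → Fin m)) [IsFiniteMeasure μ] (α : ℝ)
    (x : ℕ → Fin m) :
    thetaUpper μ α x = limsup (fun n => ENNReal.ofReal (fdens μ α n x)) atTop := by
  simp only [thetaUpper, ofReal_rpow_mul_measure_cyl]

lemma thetaLower_eq_liminf (μ : Measure (ℕ → Fin m)) [IsFiniteMeasure μ] (α : ℝ)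
    (x : ℕ → Fin m) :
    thetaLower μ α x = liminf (fun n => ENNReal.ofReal (fdens μ α n x)) atTop := by
  simp only [thetaLower, ofReal_rpow_mul_measure_cyl]

lemma measurable_fdens (μ : Measure (ℕ → Fin m)) (α : ℝ) (n : ℕ) :
    Measurable (fdens μ α n) :=
  measurable_const.mul (measurable_measure_cyl μ n).ennreal_toReal

lemma measurable_thetaUpper (μ : Measure (ℕ → Fin m)) (α : ℝ) : Measurable (thetaUpper μ α) :=
  .limsup fun n => (measurable_measure_cyl μ n).const_mul _

lemma measurable_thetaLower (μ : Measure (ℕ → Fin m)) (α : ℝ) : Measurable (thetaLower μ α) :=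
  .liminf fun n => (measurable_measure_cyl μ n).const_mul _

lemma thetaLower_le_thetaUpper (μ : Measure (ℕ → Fin m)) (α : ℝ) (x : ℕ → Fin m) :
    thetaLower μ α x ≤ thetaUpper μ α x :=
  liminf_le_limsup

lemma fdens_nonneg (μ : Measure (ℕ → Fin m)) (α : ℝ) (n : ℕ) (x : ℕ → Fin m) :
    0 ≤ fdens μ α n x := by
  unfold fdens; positivity

lemma exists_ofReal_zpow_le_lt {r : ℝ≥0∞} (hr₀ : r ≠ 0) (hr : r ≠ ∞) {η : ℝ} (hη : 1 < η) :
    ∃ j : ℤ, ENNReal.ofReal (η ^ j) ≤ r ∧ r < ENNReal.ofReal (η ^ j * η) := by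
  obtain ⟨j, h₁, h₂⟩ := exists_mem_Ico_zpow (ENNReal.toReal_pos hr₀ hr) hη
  refine ⟨j, ENNReal.ofReal_le_of_le_toReal h₁, (ENNReal.lt_ofReal_iff_toReal_lt hr).2 ?_⟩
  rwa [← zpow_add_one₀ (by positivity)]

lemma le_mul_of_ofReal_le_ofReal_mul_ofReal {u t a : ℝ} (hu : 0 < u) (ha : 0 ≤ a)
    (h : ENNReal.ofReal u ≤ ENNReal.ofReal t * ENNReal.ofReal a) : u ≤ t * a := by
  rw [← ENNReal.ofReal_mul' ha] at h
  exact (ENNReal.ofReal_le_ofReal_iff'.1 h).resolve_right hu.not_ge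

lemma eventually_fdens_mem_Ioo (μ : Measure (ℕ → Fin m)) [IsFiniteMeasure μ] (α : ℝ)
    {x : ℕ → Fin m} {l u η : ℝ} (hl : 0 < l) (hη : 1 < η)
    (hL : ENNReal.ofReal l ≤ thetaLower μ α x) (hU : thetaUpper μ α x < ENNReal.ofReal (u * η)) :
    ∀ᶠ n in atTop, l / η < fdens μ α n x ∧ fdens μ α n x < u * η := by
  rw [thetaLower_eq_liminf] at hL
  rw [thetaUpper_eq_limsup] at hU
  have hlη : ENNReal.ofReal (l / η) < ENNReal.ofReal l :=
    (ENNReal.ofReal_lt_ofReal_iff hl).2 (div_lt_self hl hη)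
  filter_upwards [eventually_lt_of_lt_liminf (hlη.trans_le hL), eventually_lt_of_limsup_lt hU]
    with n h₁ h₂
  exact ⟨(ENNReal.ofReal_lt_ofReal_iff'.1 h₁).1,
    (ENNReal.ofReal_lt_ofReal_iff_of_nonneg (fdens_nonneg μ α n x)).1 h₂⟩

lemma frequently_fdens_lt (μ : Measure (ℕ → Fin m)) [IsFiniteMeasure μ] (α : ℝ)
    {x : ℕ → Fin m} {a : ℝ} (hx : thetaLower μ α x < ENNReal.ofReal a) :
    ∃ᶠ n in atTop, fdens μ α n x < a := by
  rw [thetaLower_eq_liminf] at hx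
  exact (frequently_lt_of_liminf_lt (by isBoundedDefault) hx).mono fun n hn =>
    (ENNReal.ofReal_lt_ofReal_iff'.1 hn).1

lemma frequently_lt_fdens (μ : Measure (ℕ → Fin m)) [IsFiniteMeasure μ] (α : ℝ)
    {x : ℕ → Fin m} {a : ℝ} (hx : ENNReal.ofReal a < thetaUpper μ α x) :
    ∃ᶠ n in atTop, a < fdens μ α n x := by
  rw [thetaUpper_eq_limsup] at hx
  exact (frequently_lt_of_lt_limsup (by isBoundedDefault) hx).mono fun n hn =>
    (ENNReal.ofReal_lt_ofReal_iff'.1 hn).1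

/-- `A` is one of countably many pieces, indexed by `η`-adic windows for `thetaLower` and
`thetaUpper` and by the level `n₀` from which the densities stay in the windows. -/
lemma exists_measure_ne_zero_slice (μ : Measure (ℕ → Fin m)) [IsFiniteMeasure μ] (hμ : μ ≠ 0)
    (α : ℝ) (hae : ∀ᵐ x ∂μ, thetaUpper μ α x < ⊤ ∧ 0 < thetaLower μ α x) {t : ℝ}
    (ht : ∀ᵐ x ∂μ, thetaUpper μ α x ≤ ENNReal.ofReal t * thetaLower μ α x) {η : ℝ}
    (hη : 1 < η) :
    ∃ A : Set (ℕ → Fin m), MeasurableSet A ∧ μ A ≠ 0 ∧ ∃ l u : ℝ, 0 < l ∧ 0 < u ∧ ∃ n₀,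
      ∀ y ∈ A, (∀ n, n₀ ≤ n → l / η < fdens μ α n y ∧ fdens μ α n y < u * η) ∧
        thetaLower μ α y < ENNReal.ofReal (l * η) ∧ ENNReal.ofReal u ≤ thetaUpper μ α y ∧
        thetaUpper μ α y ≤ ENNReal.ofReal t * thetaLower μ α y := by
  set U := thetaUpper μ α
  set L := thetaLower μ α
  have hU := measurable_thetaUpper μ α
  have hL := measurable_thetaLower μ α
  let S : ℤ × ℤ × ℕ → Set (ℕ → Fin m) := fun p =>
    {y | (∀ n, p.2.2 ≤ n → η ^ p.1 / η < fdens μ α n y ∧ fdens μ α n y < η ^ p.2.1 * η) ∧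
      L y < ENNReal.ofReal (η ^ p.1 * η) ∧ ENNReal.ofReal (η ^ p.2.1) ≤ U y ∧
      U y ≤ ENNReal.ofReal t * L y}
  have hSm : ∀ p, MeasurableSet (S p) := fun p => by
    refine .inter ?_ (.inter (measurableSet_lt hL measurable_const)
      (.inter (measurableSet_le measurable_const hU) (measurableSet_le hU (hL.const_mul _))))
    refine measurableSet_setOfPred.2 (.forall fun n => measurable_const.imp ?_)
    exact measurableSet_setOfPred.1
      ((measurableSet_lt measurable_const (measurable_fdens μ α n)).inter
        (measurableSet_lt (measurable_fdens μ α n) measurable_const))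
  have hcover : ∀ᵐ y ∂μ, y ∈ ⋃ p, S p := by
    filter_upwards [hae, ht] with y ⟨hUy, hLy⟩ hUL
    have hLU := thetaLower_le_thetaUpper μ α y
    obtain ⟨j, hj₁, hj₂⟩ := exists_ofReal_zpow_le_lt hLy.ne' (hLU.trans_lt hUy).ne hη
    obtain ⟨k, hk₁, hk₂⟩ :=
      exists_ofReal_zpow_le_lt (hLy.trans_le hLU).ne' hUy.ne hη
    obtain ⟨n₀, hn₀⟩ := eventually_atTop.1
      (eventually_fdens_mem_Ioo μ α (by positivity) hη hj₁ hk₂)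
    exact mem_iUnion.2 ⟨(j, k, n₀), hn₀, hj₂, hk₁, hUL⟩
  obtain ⟨⟨j, k, n₀⟩, hp⟩ : ∃ p, μ (S p) ≠ 0 := by
    by_contra! h
    have : ∀ᵐ _ ∂μ, False := by
      filter_upwards [hcover, measure_eq_zero_iff_ae_notMem.1 (measure_iUnion_null h)]
        with y h₁ h₂ using h₂ h₁
    exact hμ (ae_eq_bot.1 (eventually_false_iff_eq_bot.1 this))
  exact ⟨S (j, k, n₀), hSm _, hp, η ^ j, η ^ k, by positivity, by positivity, n₀,
    fun y hy => hy⟩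

/-- `exists_card_mul_le_and_le_card_mul` at level `n + i` with weight
`m ^ (α (n + i)) = m ^ (α i) m ^ (α n)`. -/
lemma exists_nat_bounds_rpow_mul_fdens (μ : Measure (ℕ → Fin m)) [IsFiniteMeasure μ] (α : ℝ)
    (hm : 0 < m) {A : Set (ℕ → Fin m)} {n₀ : ℕ} {lo hi : ℝ}
    (hA : ∀ y ∈ A, ∀ n, n₀ ≤ n → lo < fdens μ α n y ∧ fdens μ α n y < hi) (i : ℕ)
    {x : ℕ → Fin m} {n : ℕ} (hn : n₀ ≤ n) {δ : ℝ} (hδ : 0 ≤ δ)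
    (hx : μ (cyl n x \ A) ≤ ENNReal.ofReal δ * μ (cyl n x)) :
    ∃ q : ℕ, q * lo ≤ (m : ℝ) ^ (α * i) * fdens μ α n x ∧
      (1 - δ) * ((m : ℝ) ^ (α * i) * fdens μ α n x) ≤ q * hi := by
  set c := (m : ℝ) ^ (α * ↑(n + i))
  obtain ⟨q, hq₁, hq₂⟩ := exists_card_mul_le_and_le_card_mul μ A (Nat.le_add_right n i) x
    (c := c) (by positivity) fun y hy =>
      ⟨(hA y hy (n + i) (by omega)).1.le, (hA y hy (n + i) (by omega)).2.le⟩
  have hscale : c * μ.real (cyl n x) = (m : ℝ) ^ (α * i) * fdens μ α n x := by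
    rw [fdens, measureReal_def, ← mul_assoc, ← Real.rpow_add (by exact_mod_cast hm)]
    simp only [c]
    push_cast
    ring_nf
  have hdiff : μ.real (cyl n x \ A) ≤ δ * μ.real (cyl n x) := by
    simpa only [measureReal_def, ENNReal.toReal_mul, ENNReal.toReal_ofReal hδ] using
      ENNReal.toReal_mono (by finiteness) hx
  have hfill : (1 - δ) * μ.real (cyl n x) ≤ μ.real (A ∩ cyl n x) := by
    have := measureReal_union_le (μ := μ) (cyl n x ∩ A) (cyl n x \ A)
    rw [inter_union_sdiff, inter_comm] at this
    linarith
  refine ⟨q, hscale ▸ hq₁, ?_⟩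
  calc (1 - δ) * ((m : ℝ) ^ (α * i) * fdens μ α n x) = c * ((1 - δ) * μ.real (cyl n x)) := by
        rw [← hscale]; ring
    _ ≤ c * μ.real (A ∩ cyl n x) := by gcongr
    _ ≤ q * hi := hq₂

lemma mul_le_pow_mul_natFloor_mul {N l u η f : ℝ} {q : ℕ} (hη : 0 < η) (hl : 0 < l)
    (hu : 0 ≤ u) (hN : 0 < N) (hηN : η ^ 2 * N ≤ ⌊N⌋₊ + 1) (hq : q * (l / η) ≤ N * f)
    (hq' : η⁻¹ * (N * f) ≤ q * (u * η)) (hf : l / η < f) (hf' : f < l * η) :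
    N * l ≤ η ^ 3 * ⌊N⌋₊ * u := by
  have hq_lt : (q : ℝ) < ⌊N⌋₊ + 1 := by
    calc (q : ℝ) = q * (l / η) * (η / l) := by field_simp
      _ < N * (l * η) * (η / l) :=
        mul_lt_mul_of_pos_right (hq.trans_lt (mul_lt_mul_of_pos_left hf' hN)) (by positivity)
      _ = η ^ 2 * N := by field_simp
      _ ≤ _ := hηN
  have hq_le : (q : ℝ) ≤ ⌊N⌋₊ := by exact_mod_cast Nat.lt_succ_iff.1 (by exact_mod_cast hq_lt)
  calc N * l = η ^ 2 * (η⁻¹ * (N * (l / η))) := by field_simp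
    _ ≤ η ^ 2 * (η⁻¹ * (N * f)) := by gcongr
    _ ≤ η ^ 2 * (q * (u * η)) := by gcongr
    _ ≤ η ^ 2 * (⌊N⌋₊ * (u * η)) := by gcongr
    _ = η ^ 3 * ⌊N⌋₊ * u := by ring

lemma natCeil_mul_le_pow_mul_mul {N l u η f : ℝ} {q : ℕ} (hη : 0 < η) (hl : 0 ≤ l)
    (hu : 0 < u) (hN : 0 < N) (hηN : η ^ 3 * (⌈N⌉₊ - 1) ≤ N) (hq : q * (l / η) ≤ N * f)
    (hq' : η⁻¹ * (N * f) ≤ q * (u * η)) (hf : u / η < f) (hf' : f < u * η) :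
    ⌈N⌉₊ * l ≤ η ^ 2 * N * u := by
  have hN_lt : N < η ^ 3 * q := by
    have h : η⁻¹ * (N * (u / η)) < q * (u * η) := (by gcongr : _ < η⁻¹ * (N * f)).trans_le hq'
    calc N = η⁻¹ * (N * (u / η)) * (η ^ 3 / u) / η := by field_simp
      _ < q * (u * η) * (η ^ 3 / u) / η := by gcongr
      _ = η ^ 3 * q := by field_simp
  have hq_ge : (⌈N⌉₊ : ℝ) ≤ q := by
    have : (⌈N⌉₊ : ℝ) - 1 < q := lt_of_mul_lt_mul_left (hηN.trans_lt hN_lt) (by positivity)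
    exact_mod_cast Nat.lt_succ_iff.1 (by exact_mod_cast (by linarith : (⌈N⌉₊ : ℝ) < q + 1))
  calc (⌈N⌉₊ : ℝ) * l = η * (⌈N⌉₊ * (l / η)) := by field_simp
    _ ≤ η * (q * (l / η)) := by gcongr
    _ ≤ η * (N * f) := by gcongr
    _ ≤ η * (N * (u * η)) := by gcongr
    _ = η ^ 2 * N * u := by ring

lemma le_pow_mul_natFloor_and_natCeil_le_pow_mul (μ : Measure (ℕ → Fin m)) [IsFiniteMeasure μ]
    (hμ : μ ≠ 0) (hm : 0 < m) (α : ℝ)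
    (hae : ∀ᵐ x ∂μ, thetaUpper μ α x < ⊤ ∧ 0 < thetaLower μ α x) {t : ℝ}
    (ht : ∀ᵐ x ∂μ, thetaUpper μ α x ≤ ENNReal.ofReal t * thetaLower μ α x) (i : ℕ) {η : ℝ}
    (hη : 1 < η) (h₁ : η ^ 2 * (m : ℝ) ^ (α * i) ≤ ⌊(m : ℝ) ^ (α * i)⌋₊ + 1)
    (h₂ : η ^ 3 * (⌈(m : ℝ) ^ (α * i)⌉₊ - 1) ≤ (m : ℝ) ^ (α * i)) :
    (m : ℝ) ^ (α * i) ≤ η ^ 4 * t * ⌊(m : ℝ) ^ (α * i)⌋₊ ∧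
      ⌈(m : ℝ) ^ (α * i)⌉₊ ≤ η ^ 3 * t * (m : ℝ) ^ (α * i) := by
  set N := (m : ℝ) ^ (α * i)
  have hN : 0 < N := by positivity
  have hη₀ : 0 < η := one_pos.trans hη
  obtain ⟨A, hAm, hA₀, l, u, hl, hu, n₀, hA⟩ := exists_measure_ne_zero_slice μ hμ α hae ht hη
  obtain ⟨x, hxA, n₁, hn₁, hx⟩ := exists_forall_measure_cyl_diff_le μ hAm hA₀
    (δ := ENNReal.ofReal (1 - η⁻¹)) (by simpa using inv_lt_one_of_one_lt₀ hη) n₀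
  obtain ⟨-, hxL, hxU, hxUL⟩ := hA x hxA
  have hcount : ∀ n, n₁ ≤ n → ∃ q : ℕ,
      q * (l / η) ≤ N * fdens μ α n x ∧ η⁻¹ * (N * fdens μ α n x) ≤ q * (u * η) := by
    intro n hn
    simpa using exists_nat_bounds_rpow_mul_fdens μ α hm (fun y hy => (hA y hy).1) i
      (hn₁.trans hn) (sub_nonneg.2 (inv_le_one_of_one_le₀ hη.le)) (hx n hn)
  have hul : u ≤ t * (l * η) :=
    le_mul_of_ofReal_le_ofReal_mul_ofReal hu (by positivity) (hxU.trans (hxUL.trans (by gcongr)))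
  obtain ⟨ns, hns, hfs⟩ := (frequently_fdens_lt μ α hxL).forall_exists_of_atTop n₁
  obtain ⟨q₁, hq₁, hq₁'⟩ := hcount ns hns
  have hxU' : ENNReal.ofReal (u / η) < thetaUpper μ α x :=
    ((ENNReal.ofReal_lt_ofReal_iff hu).2 (div_lt_self hu hη)).trans_le hxU
  obtain ⟨nb, hnb, hfb⟩ := (frequently_lt_fdens μ α hxU').forall_exists_of_atTop n₁
  obtain ⟨q₂, hq₂, hq₂'⟩ := hcount nb hnb
  have hfloor := mul_le_pow_mul_natFloor_mul hη₀ hl hu.le hN h₁ hq₁ hq₁'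
    ((hA x hxA).1 ns (hn₁.trans hns)).1 hfs
  have hceil := natCeil_mul_le_pow_mul_mul hη₀ hl.le hu hN h₂ hq₂ hq₂' hfb
    ((hA x hxA).1 nb (hn₁.trans hnb)).2
  constructor
  · refine le_of_mul_le_mul_right ?_ hl
    calc N * l ≤ η ^ 3 * ⌊N⌋₊ * u := hfloor
      _ ≤ η ^ 3 * ⌊N⌋₊ * (t * (l * η)) := by gcongr
      _ = η ^ 4 * t * ⌊N⌋₊ * l := by ring
  · refine le_of_mul_le_mul_right ?_ hl
    calc ⌈N⌉₊ * l ≤ η ^ 2 * N * u := hceil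
      _ ≤ η ^ 2 * N * (t * (l * η)) := by gcongr
      _ = η ^ 3 * t * N * l := by ring

lemma rpow_div_natFloor_le_and_natCeil_div_rpow_le (μ : Measure (ℕ → Fin m))
    [IsFiniteMeasure μ] (hμ : μ ≠ 0) (hm : 0 < m) (α : ℝ)
    (hae : ∀ᵐ x ∂μ, thetaUpper μ α x < ⊤ ∧ 0 < thetaLower μ α x) {t : ℝ}
    (ht : ∀ᵐ x ∂μ, thetaUpper μ α x ≤ ENNReal.ofReal t * thetaLower μ α x) (i : ℕ) :
    (m : ℝ) ^ (α * i) / ⌊(m : ℝ) ^ (α * i)⌋₊ ≤ t ∧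
      ⌈(m : ℝ) ^ (α * i)⌉₊ / (m : ℝ) ^ (α * i) ≤ t := by
  set N := (m : ℝ) ^ (α * i)
  have hN : 0 < N := by positivity
  have hlim : ∀ (a : ℝ) (k : ℕ), Tendsto (fun η : ℝ => η ^ k * a) (𝓝[>] 1) (𝓝 a) := fun a k =>
    (((continuous_pow k).mul continuous_const).tendsto' 1 a (by simp)).mono_left
      nhdsWithin_le_nhds
  have hev : ∀ᶠ η in 𝓝[>] (1 : ℝ), N ≤ η ^ 4 * t * ⌊N⌋₊ ∧ ⌈N⌉₊ ≤ η ^ 3 * t * N := by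
    filter_upwards [self_mem_nhdsWithin, (hlim N 2).eventually_lt_const (Nat.lt_floor_add_one N),
      (hlim _ 3).eventually_lt_const (by linarith [Nat.ceil_lt_add_one hN.le] :
        (⌈N⌉₊ : ℝ) - 1 < N)] with η hη h₁ h₂
    exact le_pow_mul_natFloor_and_natCeil_le_pow_mul μ hμ hm α hae ht i hη h₁.le h₂.le
  have h₁ : N ≤ t * ⌊N⌋₊ := ge_of_tendsto (by simpa [mul_assoc] using hlim (t * ⌊N⌋₊) 4)
    (hev.mono fun _ h => h.1)
  have h₂ : (⌈N⌉₊ : ℝ) ≤ t * N := ge_of_tendsto (by simpa [mul_assoc] using hlim (t * N) 3)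
    (hev.mono fun _ h => h.2)
  have hfloor : (0 : ℝ) < ⌊N⌋₊ := by
    by_contra! h
    nlinarith [(Nat.cast_nonneg ⌊N⌋₊ : (0 : ℝ) ≤ _)]
  exact ⟨(div_le_iff₀ hfloor).2 h₁, (div_le_iff₀ hN).2 h₂⟩

lemma ae_thetaUpper_le_mul_thetaLower (μ : Measure (ℕ → Fin m)) [IsFiniteMeasure μ] (α : ℝ)
    (hae : ∀ᵐ x ∂μ, thetaUpper μ α x < ⊤ ∧ 0 < thetaLower μ α x) {c : ℝ≥0∞}
    (hc : essSup (fun x => thetaUpper μ α x / thetaLower μ α x) μ < c) :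
    ∀ᵐ x ∂μ, thetaUpper μ α x ≤ c * thetaLower μ α x := by
  filter_upwards [hae, ae_le_essSup (fun x => thetaUpper μ α x / thetaLower μ α x)]
    with x ⟨hU, hL⟩ hx
  have hL' : thetaLower μ α x ≠ ⊤ := ((thetaLower_le_thetaUpper μ α x).trans_lt hU).ne
  exact (ENNReal.div_lt_iff (.inl hL.ne') (.inl hL')).1 (hx.trans_lt hc) |>.le

end Marstrand

theorem marstrand_lower_bound_power_general (m : ℕ) (hm : 2 ≤ m) (α : ℝ)
    (μ : Measure (ℕ → Fin m)) [IsFiniteMeasure μ]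
    (hμ : μ ≠ 0)
    (hae : ∀ᵐ x ∂μ, thetaUpper μ α x < ⊤ ∧ 0 < thetaLower μ α x)
    (i : ℕ) :
    ENNReal.ofReal (max ((m : ℝ) ^ (α * i) / (⌊(m : ℝ) ^ (α * i)⌋₊ : ℝ))
        ((⌈(m : ℝ) ^ (α * i)⌉₊ : ℝ) / (m : ℝ) ^ (α * i))) ≤
      essSup (fun x => thetaUpper μ α x / thetaLower μ α x) μ := by
  refine le_of_forall_gt_imp_ge_of_dense fun c hc => ?_
  obtain rfl | hc_top := eq_or_ne c ⊤
  · exact le_top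
  rw [← ENNReal.ofReal_toReal hc_top] at hc ⊢
  obtain ⟨h₁, h₂⟩ := Marstrand.rpow_div_natFloor_le_and_natCeil_div_rpow_le μ hμ (by omega) α hae
    (Marstrand.ae_thetaUpper_le_mul_thetaLower μ α hae hc) i
  exact ENNReal.ofReal_le_ofReal (max_le h₁ h₂)

theorem marstrand_lower_bound_power (m : ℕ) (hm : 2 ≤ m) (α : ℝ)
    (hα : α ∈ Set.Ioo (0 : ℝ) 1) (μ : Measure (ℕ → Fin m)) [IsFiniteMeasure μ]
    (hμ : μ ≠ 0)
    (hae : ∀ᵐ x ∂μ, thetaUpper μ α x < ⊤ ∧ 0 < thetaLower μ α x)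
    (i : ℕ) (hi : 1 ≤ i) :
    ENNReal.ofReal (max ((m : ℝ) ^ (α * i) / (⌊(m : ℝ) ^ (α * i)⌋₊ : ℝ))
        ((⌈(m : ℝ) ^ (α * i)⌉₊ : ℝ) / (m : ℝ) ^ (α * i))) ≤
      essSup (fun x => thetaUpper μ α x / thetaLower μ α x) μ :=
  marstrand_lower_bound_power_general m hm α μ hμ hae i
end

section
/- Let m ≥ 2 be an integer and α ∈ (0,1) with m^α not an integer. Then there exists a finite nonzero Borel measure μ on T = {0,1,...,m-1}^ℕ such that for every x in the support of μ, x_0 ≤ Θ_{α,*}(μ,x) ≤ Θ^{α,*}(μ,x) ≤ (⌈m^α⌉/⌊m^α⌋)·x_0, where x_0 = μ(T). In particular C(μ,α) = (esssup_x Θ^{α,*}(μ,x))/(essinf_x Θ_{α,*}(μ,x)) ≤ ⌈m^α⌉/⌊m^α⌋. -/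
/-!
Put β = m ^ α and p = ⌊β⌋, so that p < β < p + 1 = ⌈β⌉ ≤ m. Choose branching numbers
c n ∈ {p, p + 1} greedily, taking p + 1 whenever the product P (n + 1) = c 0 ⋯ c n stays
below β ^ (n + 1); then β ^ n / P n stays in [1, (p + 1) / p]. Under the product of the uniform
measures on the digits {0, …, c n - 1}, every cylinder of length n meeting the support has mass
1 / P n, so m ^ (α n) μ (B_n x) = β ^ n / P n on the support.
-/

open MeasureTheory Filter Set ENNReal

def IsUniform {m : ℕ} (μ : Measure (ℕ → Fin m)) : Prop :=
  ∀ x ∈ msupp μ, ∀ y ∈ msupp μ, ∀ r : ℝ, 0 < r →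
    μ {z | tdist x z ≤ r} = μ {z | tdist y z ≤ r}

open ProbabilityTheory

noncomputable def greedyProd (β : ℝ) (p : ℕ) : ℕ → ℕ
  | 0 => 1
  | n + 1 => greedyProd β p n *
      if (greedyProd β p n * (p + 1) : ℝ) ≤ β ^ (n + 1) then p + 1 else p

noncomputable def greedyDigit (β : ℝ) (p n : ℕ) : ℕ :=
  if (greedyProd β p n * (p + 1) : ℝ) ≤ β ^ (n + 1) then p + 1 else p

section Greedy

variable {β : ℝ} {p : ℕ}

theorem greedyProd_succ (β : ℝ) (p n : ℕ) :
    greedyProd β p (n + 1) = greedyProd β p n * greedyDigit β p n := by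
  rw [greedyProd, greedyDigit]

theorem greedyDigit_pos (hp : 0 < p) (n : ℕ) : 0 < greedyDigit β p n := by
  unfold greedyDigit; split_ifs <;> omega

theorem greedyDigit_le (β : ℝ) (p n : ℕ) : greedyDigit β p n ≤ p + 1 := by
  unfold greedyDigit; split_ifs <;> omega

theorem greedyProd_eq_prod (β : ℝ) (p n : ℕ) :
    greedyProd β p n = ∏ i ∈ Finset.range n, greedyDigit β p i := by
  induction n with
  | zero => rfl
  | succ n ih => rw [greedyProd_succ, Finset.prod_range_succ, ih]

theorem greedyProd_pos (hp : 0 < p) (n : ℕ) : 0 < greedyProd β p n := by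
  rw [greedyProd_eq_prod]
  exact Finset.prod_pos fun i _ => greedyDigit_pos hp i

theorem greedyProd_le_pow (hpβ : p ≤ β) (n : ℕ) : (greedyProd β p n : ℝ) ≤ β ^ n := by
  induction n with
  | zero => simp [greedyProd]
  | succ n ih =>
    rw [greedyProd_succ, greedyDigit]
    split_ifs with h
    · exact_mod_cast h
    · push_cast
      rw [pow_succ]
      exact mul_le_mul ih hpβ p.cast_nonneg (ih.trans' (by positivity))

theorem pow_le_greedyProd (hβ : 0 ≤ β) (hβp : β ≤ p + 1) (n : ℕ) :
    p * β ^ n ≤ (p + 1) * (greedyProd β p n : ℝ) := by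
  induction n with
  | zero => simp [greedyProd]
  | succ n ih =>
    rw [greedyProd_succ, greedyDigit]
    split_ifs with h
    · push_cast
      calc (p : ℝ) * β ^ (n + 1) = p * β ^ n * β := by ring
        _ ≤ (p + 1) * greedyProd β p n * (p + 1) := by gcongr
        _ = (p + 1) * (greedyProd β p n * (p + 1)) := by ring
    · push_cast
      calc (p : ℝ) * β ^ (n + 1) ≤ p * (greedyProd β p n * (p + 1)) := by
            gcongr; exact (not_le.1 h).le
        _ = (p + 1) * (greedyProd β p n * p) := by ring

theorem one_le_pow_div_greedyProd (hp : 0 < p) (hpβ : p ≤ β) (n : ℕ) :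
    1 ≤ β ^ n / greedyProd β p n :=
  (one_le_div (by exact_mod_cast greedyProd_pos hp n)).2 (greedyProd_le_pow hpβ n)

theorem pow_div_greedyProd_le (hp : 0 < p) (hβ : 0 ≤ β) (hβp : β ≤ p + 1)
    (n : ℕ) : β ^ n / greedyProd β p n ≤ (p + 1) / p := by
  rw [div_le_div_iff₀ (by exact_mod_cast greedyProd_pos hp n) (by exact_mod_cast hp), mul_comm]
  exact pow_le_greedyProd hβ hβp n

end Greedy

section InfinitePi

variable {m : ℕ} (ν : ℕ → Measure (Fin m)) [∀ i, IsProbabilityMeasure (ν i)]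

theorem cyl_eq_pi (n : ℕ) (x : ℕ → Fin m) :
    cyl n x = Set.pi (Finset.range n : Set ℕ) fun i => {x i} := by
  ext y; simp [cyl]

theorem infinitePi_cyl (n : ℕ) (x : ℕ → Fin m) :
    Measure.infinitePi ν (cyl n x) = ∏ i ∈ Finset.range n, ν i {x i} := by
  rw [cyl_eq_pi, Measure.infinitePi_pi _ fun i _ => measurableSet_singleton (x i)]

theorem mem_msupp_infinitePi_iff (x : ℕ → Fin m) :
    x ∈ msupp (Measure.infinitePi ν) ↔ ∀ i, ν i {x i} ≠ 0 := by
  simp only [msupp, Set.mem_ofPred_eq, infinitePi_cyl, pos_iff_ne_zero, Finset.prod_ne_zero_iff,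
    Finset.mem_range]
  exact ⟨fun h i => h (i + 1) i i.lt_succ_self, fun h _ i _ => h i⟩

theorem ae_mem_msupp_infinitePi :
    ∀ᵐ x ∂Measure.infinitePi ν, x ∈ msupp (Measure.infinitePi ν) := by
  simp only [mem_msupp_infinitePi_iff, ae_all_iff]
  exact fun i => (measurePreserving_eval_infinitePi ν i).quasiMeasurePreserving.ae
    (ae_iff_of_countable.2 fun _ h => h)

end InfinitePi

section UniformDigits

variable {m : ℕ}

theorem uniformOn_val_lt_singleton {c : ℕ} (hcm : c ≤ m) (k : Fin m) :
    uniformOn {j : Fin m | (j : ℕ) < c} {k} = if (k : ℕ) < c then (c : ℝ≥0∞)⁻¹ else 0 := by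
  classical
  split_ifs with hk
  · simpa [Fin.card_filter_val_lt, hk, hcm] using
      uniformOn_apply_finset (s := Finset.univ.filter fun j : Fin m => (j : ℕ) < c) (t := {k})
  · rw [uniformOn, cond_apply (Set.toFinite _).measurableSet]
    simpa using not_lt.1 hk

theorem infinitePi_uniformOn_cyl {c : ℕ → ℕ} (hcm : ∀ i, c i ≤ m)
    [∀ i, IsProbabilityMeasure (uniformOn {j : Fin m | (j : ℕ) < c i})] {x : ℕ → Fin m}
    (hx : x ∈ msupp (Measure.infinitePi fun i => uniformOn {j : Fin m | (j : ℕ) < c i}))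
    (n : ℕ) :
    Measure.infinitePi (fun i => uniformOn {j : Fin m | (j : ℕ) < c i}) (cyl n x) =
      ((∏ i ∈ Finset.range n, c i : ℕ) : ℝ≥0∞)⁻¹ := by
  have hxc (i : ℕ) : (x i : ℕ) < c i := by
    by_contra h
    exact (mem_msupp_infinitePi_iff _ x).1 hx i
      (by rw [uniformOn_val_lt_singleton (hcm i), if_neg h])
  rw [infinitePi_cyl, Nat.cast_prod,
    ENNReal.prod_inv_distrib fun i _ j _ _ => .inr (natCast_ne_top _)]
  exact Finset.prod_congr rfl fun i _ => by
    rw [uniformOn_val_lt_singleton (hcm i), if_pos (hxc i)]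

end UniformDigits

section Densities

variable {m : ℕ} {μ : Measure (ℕ → Fin m)} {α : ℝ}

theorem le_thetaLower {x : ℕ → Fin m} {a : ℝ≥0∞}
    (h : ∀ n : ℕ, a ≤ ENNReal.ofReal ((m : ℝ) ^ (α * n)) * μ (cyl n x)) :
    a ≤ thetaLower μ α x :=
  le_liminf_of_le (by isBoundedDefault) (.of_forall h)

theorem thetaUpper_le {x : ℕ → Fin m} {b : ℝ≥0∞}
    (h : ∀ n : ℕ, ENNReal.ofReal ((m : ℝ) ^ (α * n)) * μ (cyl n x) ≤ b) :
    thetaUpper μ α x ≤ b :=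
  limsup_le_of_le (by isBoundedDefault) (.of_forall h)

theorem thetaLower_le_thetaUpper (x : ℕ → Fin m) : thetaLower μ α x ≤ thetaUpper μ α x :=
  liminf_le_limsup

theorem essSup_thetaUpper_div_essInf_thetaLower_le {a b : ℝ≥0∞}
    (hsupp : ∀ᵐ x ∂μ, x ∈ msupp μ) (hlow : ∀ x ∈ msupp μ, a ≤ thetaLower μ α x)
    (hup : ∀ x ∈ msupp μ, thetaUpper μ α x ≤ b) :
    essSup (thetaUpper μ α) μ / essInf (thetaLower μ α) μ ≤ b / a :=
  ENNReal.div_le_div (essSup_le_of_ae_le _ (hsupp.mono hup))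
    (le_essInf_of_ae_le _ (hsupp.mono hlow))

end Densities

theorem exists_isProbabilityMeasure_cyl_density_bounds {m p : ℕ} {β : ℝ} (hp : 0 < p)
    (hpβ : p ≤ β) (hβp : β ≤ p + 1) (hpm : p + 1 ≤ m) :
    ∃ μ : Measure (ℕ → Fin m), IsProbabilityMeasure μ ∧ (∀ᵐ x ∂μ, x ∈ msupp μ) ∧
      ∀ x ∈ msupp μ, ∀ n : ℕ, 1 ≤ ENNReal.ofReal (β ^ n) * μ (cyl n x) ∧
        ENNReal.ofReal (β ^ n) * μ (cyl n x) ≤ ENNReal.ofReal ((p + 1) / p) := by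
  have hβ : 0 ≤ β := hpβ.trans' p.cast_nonneg
  have hcm (i : ℕ) : greedyDigit β p i ≤ m := (greedyDigit_le β p i).trans hpm
  have (i : ℕ) : IsProbabilityMeasure (uniformOn {j : Fin m | (j : ℕ) < greedyDigit β p i}) :=
    isProbabilityMeasure_uniformOn (Set.toFinite _) ⟨⟨0, by omega⟩, greedyDigit_pos hp i⟩
  refine ⟨Measure.infinitePi fun i => uniformOn {j : Fin m | (j : ℕ) < greedyDigit β p i},
    inferInstance, ae_mem_msupp_infinitePi _, fun x hx n => ?_⟩
  have hP : (0 : ℝ) < greedyProd β p n := by exact_mod_cast greedyProd_pos hp n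
  rw [infinitePi_uniformOn_cyl hcm hx, ← greedyProd_eq_prod, ← ofReal_natCast,
    ← ENNReal.ofReal_inv_of_pos hP, ← ENNReal.ofReal_mul (pow_nonneg hβ n), ← div_eq_mul_inv]
  exact ⟨ENNReal.one_le_ofReal.2 (one_le_pow_div_greedyProd hp hpβ n),
    ENNReal.ofReal_le_ofReal (pow_div_greedyProd_le hp hβ hβp n)⟩

theorem natCeil_eq_natFloor_add_one {β : ℝ} (hβ : 0 ≤ β) (hnotint : ∀ k : ℤ, β ≠ k) :
    ⌈β⌉₊ = ⌊β⌋₊ + 1 := by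
  refine le_antisymm (Nat.ceil_le_floor_add_one β) (Nat.lt_ceil.2 ?_)
  exact (Nat.floor_le hβ).lt_of_ne fun h => hnotint ⌊β⌋₊ (by rw [Int.cast_natCast, h])

theorem marstrand_upper_bound (m : ℕ) (hm : 2 ≤ m) (α : ℝ)
    (hα : α ∈ Set.Ioo (0 : ℝ) 1) (hnotint : ∀ k : ℤ, (m : ℝ) ^ α ≠ k) :
    ∃ μ : Measure (ℕ → Fin m), IsFiniteMeasure μ ∧ μ ≠ 0 ∧
      (∀ x ∈ msupp μ,
        μ Set.univ ≤ thetaLower μ α x ∧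
        thetaLower μ α x ≤ thetaUpper μ α x ∧
        thetaUpper μ α x ≤
          ENNReal.ofReal ((⌈(m : ℝ) ^ α⌉₊ : ℝ) / (⌊(m : ℝ) ^ α⌋₊ : ℝ)) *
            μ Set.univ) ∧
      essSup (thetaUpper μ α) μ / essInf (thetaLower μ α) μ ≤
        ENNReal.ofReal ((⌈(m : ℝ) ^ α⌉₊ : ℝ) / (⌊(m : ℝ) ^ α⌋₊ : ℝ)) := by
  set β := (m : ℝ) ^ α
  have hm1 : (1 : ℝ) < m := by exact_mod_cast hm
  have hβ1 : 1 < β := Real.one_lt_rpow hm1 hα.1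
  have hβm : β < m := by simpa using Real.rpow_lt_rpow_of_exponent_lt hm1 hα.2
  have hceil : ⌈β⌉₊ = ⌊β⌋₊ + 1 := natCeil_eq_natFloor_add_one (by positivity) hnotint
  obtain ⟨μ, hμ, hsupp, hdens⟩ := exists_isProbabilityMeasure_cyl_density_bounds
    (Nat.floor_pos.2 hβ1.le) (Nat.floor_le (by positivity)) (Nat.lt_floor_add_one β).le
    (hceil ▸ Nat.ceil_le.2 hβm.le)
  have hpow (n : ℕ) : (m : ℝ) ^ (α * n) = β ^ n := by
    rw [Real.rpow_mul (by positivity), Real.rpow_natCast]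
  have hlow (x) (hx : x ∈ msupp μ) : 1 ≤ thetaLower μ α x :=
    le_thetaLower fun n => hpow n ▸ (hdens x hx n).1
  have hup (x) (hx : x ∈ msupp μ) : thetaUpper μ α x ≤ ENNReal.ofReal (⌈β⌉₊ / ⌊β⌋₊) := by
    rw [hceil, Nat.cast_succ]
    exact thetaUpper_le fun n => hpow n ▸ (hdens x hx n).2
  refine ⟨μ, inferInstance, IsProbabilityMeasure.ne_zero μ, fun x hx => ?_, ?_⟩
  · rw [measure_univ, mul_one]
    exact ⟨hlow x hx, thetaLower_le_thetaUpper x, hup x hx⟩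
  · simpa using essSup_thetaUpper_div_essInf_thetaLower_le hsupp hlow hup
end

section
/- Let w > 1 be a real number and let (f_n)_{n≥0} be a sequence of positive reals with f_0 = x_0 > 0 defined inductively by: f_n = f_{n-1}·(w/⌈w⌉) if f_{n-1} > (⌈w⌉/w)·x_0, and f_n = f_{n-1}·(w/⌊w⌋) otherwise. Then f_n ≤ (⌈w⌉/⌊w⌋)·x_0 for all n, and whenever f_{n-1} > (⌈w⌉/w)·x_0, we have f_n > x_0; hence liminf_n f_n ≥ x_0 and limsup_n f_n ≤ (⌈w⌉/⌊w⌋)·x_0. -/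
open Filter

theorem recursion_bounds (w x₀ : ℝ) (hw : 1 < w) (hx₀ : 0 < x₀)
    (f : ℕ → ℝ) (hf0 : f 0 = x₀)
    (hrec : ∀ n : ℕ, f (n + 1) =
      if f n > ((⌈w⌉₊ : ℝ) / w) * x₀ then f n * (w / (⌈w⌉₊ : ℝ))
      else f n * (w / (⌊w⌋₊ : ℝ))) :
    (∀ n, f n ≤ ((⌈w⌉₊ : ℝ) / (⌊w⌋₊ : ℝ)) * x₀) ∧
    (∀ n, f n > ((⌈w⌉₊ : ℝ) / w) * x₀ → f (n + 1) > x₀) ∧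
    x₀ ≤ Filter.liminf f atTop ∧
    Filter.limsup f atTop ≤ ((⌈w⌉₊ : ℝ) / (⌊w⌋₊ : ℝ)) * x₀ := by
  have hw0 : (0:ℝ) < w := lt_trans zero_lt_one hw
  have hfl1 : 1 ≤ ⌊w⌋₊ := Nat.le_floor (by exact_mod_cast hw.le)
  have hfl : (1:ℝ) ≤ (⌊w⌋₊ : ℝ) := by exact_mod_cast hfl1
  have hflw : (⌊w⌋₊:ℝ) ≤ w := Nat.floor_le hw0.le
  have hwcl : w ≤ (⌈w⌉₊:ℝ) := Nat.le_ceil w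
  have hfl0 : (0:ℝ) < (⌊w⌋₊:ℝ) := lt_of_lt_of_le zero_lt_one hfl
  have hcl0 : (0:ℝ) < (⌈w⌉₊:ℝ) := lt_of_lt_of_le hw0 hwcl
  -- lower bound
  have hlow : ∀ n, x₀ ≤ f n := by
    intro n
    induction n with
    | zero => rw [hf0]
    | succ n ih =>
      rw [hrec n]
      split_ifs with h
      · have hkey : ((⌈w⌉₊:ℝ) / w * x₀) * (w / (⌈w⌉₊:ℝ)) = x₀ := by
          field_simp
        calc x₀ = ((⌈w⌉₊:ℝ) / w * x₀) * (w / (⌈w⌉₊:ℝ)) := hkey.symm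
          _ ≤ f n * (w / (⌈w⌉₊:ℝ)) :=
            mul_le_mul_of_nonneg_right h.le (div_pos hw0 hcl0).le
      · have h1 : (1:ℝ) ≤ w / (⌊w⌋₊:ℝ) := (one_le_div hfl0).mpr hflw
        calc x₀ ≤ f n := ih
          _ ≤ f n * (w / (⌊w⌋₊:ℝ)) :=
            le_mul_of_one_le_right (hx₀.le.trans ih) h1
  -- upper bound
  have hupp : ∀ n, f n ≤ ((⌈w⌉₊:ℝ) / (⌊w⌋₊:ℝ)) * x₀ := by
    intro n
    induction n with
    | zero =>
      rw [hf0]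
      have : (1:ℝ) ≤ (⌈w⌉₊:ℝ) / (⌊w⌋₊:ℝ) := (one_le_div hfl0).mpr (hflw.trans hwcl)
      nlinarith
    | succ n ih =>
      rw [hrec n]
      split_ifs with h
      · have h1 : w / (⌈w⌉₊:ℝ) ≤ 1 := (div_le_one hcl0).mpr hwcl
        calc f n * (w / (⌈w⌉₊:ℝ)) ≤ f n :=
              mul_le_of_le_one_right (hx₀.le.trans (hlow n)) h1
          _ ≤ ((⌈w⌉₊:ℝ) / (⌊w⌋₊:ℝ)) * x₀ := ih
      · push_neg at h
        have hkey : ((⌈w⌉₊:ℝ) / w * x₀) * (w / (⌊w⌋₊:ℝ)) = ((⌈w⌉₊:ℝ) / (⌊w⌋₊:ℝ)) * x₀ := by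
          field_simp
        calc f n * (w / (⌊w⌋₊:ℝ)) ≤ ((⌈w⌉₊:ℝ) / w * x₀) * (w / (⌊w⌋₊:ℝ)) :=
              mul_le_mul_of_nonneg_right h (div_pos hw0 hfl0).le
          _ = ((⌈w⌉₊:ℝ) / (⌊w⌋₊:ℝ)) * x₀ := hkey
  refine ⟨hupp, ?_, ?_, ?_⟩
  · intro n h
    rw [hrec n, if_pos h]
    have hkey : ((⌈w⌉₊:ℝ) / w * x₀) * (w / (⌈w⌉₊:ℝ)) = x₀ := by field_simp
    calc x₀ = ((⌈w⌉₊:ℝ) / w * x₀) * (w / (⌈w⌉₊:ℝ)) := hkey.symm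
      _ < f n * (w / (⌈w⌉₊:ℝ)) :=
        mul_lt_mul_of_pos_right h (div_pos hw0 hcl0)
  · exact le_liminf_of_le ((isBoundedUnder_of ⟨_, hupp⟩).isCoboundedUnder_ge)
      (Eventually.of_forall hlow)
  · exact limsup_le_of_le (((isBoundedUnder_of ⟨x₀, fun n => hlow n⟩ : IsBoundedUnder (· ≥ ·) atTop f)).isCoboundedUnder_le)
      (Eventually.of_forall hupp)
end
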